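/- Let T : A(X,E) → A(Y,F) be a vector space isomorphism (linear bijection) that preserves common zeros, where A(X,E) and A(Y,F) are almost normally multiplicative vector subspaces of C(X,E) and C(Y,F). Then there are dense subsets Z ⊆ βY and W ⊆ βX and homeomorphisms h : Z → X and k : W → Y such that: (i) the map from Z ∪ ι_Y(Y) to ι_X(X) ∪ W which sends y ∈ Z to ι_X(h(y)) and ι_Y(y) (y ∈ Y) to k^{-1}(y) is well defined (the two prescriptions agree on Z ∩ ι_Y(Y)) and is a homeomorphism; (ii) for all f ∈ A(X,E) and y ∈ Z, (Tf)^β(y) = (T𝐮)^β(y) where u = f(h(y)); and (iii) for all g ∈ A(Y,F) and x ∈ W, (T^{-1}g)^β(x) = (T^{-1}𝐯)^β(x) where v = g(k(x)). -/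

import Mathlib

open Set Filter Topology

/-- The zero set of a function. -/
def zeroSet {α β : Type*} [Zero β] (f : α → β) : Set α := {x | f x = 0}

/-- A vector subspace `AX` of `C(X)` is almost normal if all its members are continuous and
for every pair of subsets `P`, `Q` of `X` whose closures in the Stone–Čech compactification
`βX` are disjoint, there is `f ∈ AX` with `f = 0` on `P` and `f = 1` on `Q`. -/
def AlmostNormal (X : Type*) [TopologicalSpace X] (AX : Submodule ℝ (X → ℝ)) : Prop :=
  (∀ φ ∈ AX, Continuous φ) ∧
  ∀ P Q : Set X,
    Disjoint (closure (stoneCechUnit '' P)) (closure (stoneCechUnit '' Q)) →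
      ∃ φ ∈ AX, (∀ x ∈ P, φ x = 0) ∧ (∀ x ∈ Q, φ x = 1)

/-- A vector subspace `AXE` of `C(X,E)` is almost normally multiplicative if all its members
are continuous, it contains the constant functions, and there is an almost normal subspace
`AX` of `C(X)` such that `φ • f ∈ AXE` whenever `φ ∈ AX` and `f ∈ AXE`. -/
def AlmostNormallyMultiplicative (X E : Type*) [TopologicalSpace X] [TopologicalSpace E]
    [AddCommGroup E] [Module ℝ E] (AXE : Submodule ℝ (X → E)) : Prop :=
  (∀ f ∈ AXE, Continuous f) ∧
  (∀ u : E, (fun _ : X => u) ∈ AXE) ∧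
  ∃ AX : Submodule ℝ (X → ℝ), AlmostNormal X AX ∧
    ∀ φ ∈ AX, ∀ f ∈ AXE, (fun x => φ x • f x) ∈ AXE

/-- A map `T` between subspaces of `C(X,E)` and `C(Y,F)` preserves common zeros if for every
`k ∈ ℕ` and every finite family `f₁, …, f_k`, the zero sets of the `fᵢ` have a common point
iff the zero sets of the `T fᵢ` do. -/
def PreservesCommonZeros {X Y E F : Type*} [TopologicalSpace X] [TopologicalSpace Y]
    [AddCommGroup E] [Module ℝ E] [AddCommGroup F] [Module ℝ F]
    {AXE : Submodule ℝ (X → E)} {AYF : Submodule ℝ (Y → F)}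
    (T : AXE → AYF) : Prop :=
  ∀ (k : ℕ) (f : Fin (k + 1) → AXE),
    (⋂ i, zeroSet ((f i : X → E))).Nonempty ↔ (⋂ i, zeroSet ((T (f i) : Y → F))).Nonempty

/-- The set `Z_x ⊆ βY`: the intersection, over all `f` in the subspace vanishing at `x`, of the
closures in `βY` of the zero sets of `T f`. -/
def Zx {X Y E F : Type*} [TopologicalSpace X] [TopologicalSpace Y]
    [AddCommGroup E] [Module ℝ E] [AddCommGroup F] [Module ℝ F]
    {AXE : Submodule ℝ (X → E)} {AYF : Submodule ℝ (Y → F)}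
    (T : AXE → AYF) (x : X) : Set (StoneCech Y) :=
  ⋂ (f : AXE) (_ : (f : X → E) x = 0), closure (stoneCechUnit '' zeroSet ((T f : Y → F)))


/-- The unique continuous extension `g^β : βY → βF` of a continuous map `g : Y → F`. -/
noncomputable def betaExt {Y F : Type*} [TopologicalSpace Y] [TopologicalSpace F]
    {g : Y → F} (hg : Continuous g) : StoneCech Y → StoneCech F :=
  stoneCechExtend (continuous_stoneCechUnit.comp hg)

/-!
The link between the two sides is the support map `μ = supportPoint : X → βY`, choosing a point of
`Zx T x`; this set is nonempty by compactness of `βY`, since `T` preserves common zeros of finite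
families. Consequently `(Tf)^β (μ x)` only depends on `f x`, and conversely `f x` is determined by
`Tf` on any neighbourhood of `μ x` in `βY`. Testing this on the functions `ψ • g₀`, with `g₀` a
nonzero constant or its image under `T` (nowhere zero either way) and `ψ` from the almost normal
subspace separating two closed subsets of the Stone–Čech compactification, shows that `μ` is
continuous with dense range and that the support map `ν : Y → βX` of `T⁻¹` satisfies
`ν^β ∘ μ = ι_X`. Hence `μ` and `ν` are embeddings, and `ν^β` restricts to a homeomorphism
`range μ ∪ ι_Y(Y) ≃ ι_X(X) ∪ range ν` with inverse `μ^β`.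
-/

def Set.InvOn.homeomorph {α β : Type*} [TopologicalSpace α] [TopologicalSpace β]
    {f : α → β} {g : β → α} {s : Set α} {t : Set β} (h : InvOn g f s t)
    (hf : MapsTo f s t) (hg : MapsTo g t s) (hfc : Continuous f) (hgc : Continuous g) :
    s ≃ₜ t where
  toFun := hf.restrict f s t
  invFun := hg.restrict g t s
  left_inv x := Subtype.ext (h.1 x.2)
  right_inv y := Subtype.ext (h.2 y.2)
  continuous_toFun := hfc.restrict hf
  continuous_invFun := hgc.restrict hg

section StoneCech

variable {X Y : Type*} [TopologicalSpace X] [TopologicalSpace Y]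

theorem betaExt_stoneCechUnit {F : Type*} [TopologicalSpace F] {g : Y → F} (hg : Continuous g)
    (y : Y) : betaExt hg (stoneCechUnit y) = stoneCechUnit (g y) :=
  stoneCechExtend_stoneCechUnit _ y

theorem isEmbedding_of_stoneCechExtend_comp_eq [T2Space X] [CompletelyRegularSpace X]
    {μ : X → StoneCech Y} {ν : Y → StoneCech X} (hμ : Continuous μ) (hν : Continuous ν)
    (hνμ : ∀ x, stoneCechExtend hν (μ x) = stoneCechUnit x) : IsEmbedding μ := by
  have : T35Space X := ⟨⟩
  refine .of_comp hμ (continuous_stoneCechExtend hν) ?_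
  rw [show stoneCechExtend hν ∘ μ = stoneCechUnit from funext hνμ]
  exact isEmbedding_stoneCechUnit

theorem exists_homeomorph_union_range_of_stoneCechExtend_comp_eq
    {μ : X → StoneCech Y} {ν : Y → StoneCech X} (hμ : Continuous μ) (hν : Continuous ν)
    (hνμ : ∀ x, stoneCechExtend hν (μ x) = stoneCechUnit x)
    (hμν : ∀ y, stoneCechExtend hμ (ν y) = stoneCechUnit y) :
    ∃ H : (range μ ∪ range (stoneCechUnit : Y → StoneCech Y) : Set (StoneCech Y)) ≃ₜ
        (range (stoneCechUnit : X → StoneCech X) ∪ range ν : Set (StoneCech X)),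
      ∀ z, (H z : StoneCech X) = stoneCechExtend hν z := by
  have hmaps : MapsTo (stoneCechExtend hν) (range μ ∪ range stoneCechUnit)
      (range stoneCechUnit ∪ range ν) := by
    rintro _ (⟨x, rfl⟩ | ⟨y, rfl⟩)
    · exact .inl ⟨x, (hνμ x).symm⟩
    · exact .inr ⟨y, (stoneCechExtend_stoneCechUnit hν y).symm⟩
  have hmaps' : MapsTo (stoneCechExtend hμ) (range stoneCechUnit ∪ range ν)
      (range μ ∪ range stoneCechUnit) := by
    rintro _ (⟨x, rfl⟩ | ⟨y, rfl⟩)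
    · exact .inl ⟨x, (stoneCechExtend_stoneCechUnit hμ x).symm⟩
    · exact .inr ⟨y, (hμν y).symm⟩
  have hinv : InvOn (stoneCechExtend hμ) (stoneCechExtend hν) (range μ ∪ range stoneCechUnit)
      (range stoneCechUnit ∪ range ν) := by
    constructor <;> rintro _ (⟨x, rfl⟩ | ⟨y, rfl⟩) <;>
      simp only [hνμ, hμν, stoneCechExtend_stoneCechUnit]
  exact ⟨hinv.homeomorph hmaps hmaps' (continuous_stoneCechExtend hν)
    (continuous_stoneCechExtend hμ), fun _ => rfl⟩

end StoneCech

section AlmostNormal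

variable {X E : Type*} [TopologicalSpace X]

theorem AlmostNormal.exists_eqOn_zero_one {AX : Submodule ℝ (X → ℝ)} (hAX : AlmostNormal X AX)
    {K₁ K₂ : Set (StoneCech X)} (hK₁ : IsClosed K₁) (hK₂ : IsClosed K₂) (hK : Disjoint K₁ K₂) :
    ∃ φ ∈ AX, ∃ N₁ N₂ : Set (StoneCech X), IsOpen N₁ ∧ IsOpen N₂ ∧ K₁ ⊆ N₁ ∧ K₂ ⊆ N₂ ∧
      (∀ x, stoneCechUnit x ∈ N₁ → φ x = 0) ∧ (∀ x, stoneCechUnit x ∈ N₂ → φ x = 1) := by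
  obtain ⟨N₁, hN₁, hKN₁, hN₁K⟩ := normal_exists_closure_subset hK₁ hK₂.isOpen_compl
    (subset_compl_iff_disjoint_right.2 hK)
  obtain ⟨N₂, hN₂, hKN₂, hN₂N₁⟩ := normal_exists_closure_subset hK₂
    isClosed_closure.isOpen_compl (subset_compl_comm.1 hN₁K)
  have hdisj : Disjoint (closure (stoneCechUnit '' (stoneCechUnit ⁻¹' N₁)))
      (closure (stoneCechUnit '' (stoneCechUnit ⁻¹' N₂))) :=
    ((disjoint_compl_left.mono_left hN₂N₁).symm).mono
      (closure_mono (image_preimage_subset _ _)) (closure_mono (image_preimage_subset _ _))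
  obtain ⟨φ, hφ, hφ₀, hφ₁⟩ := hAX.2 _ _ hdisj
  exact ⟨φ, hφ, N₁, N₂, hN₁, hN₂, hKN₁, hKN₂, hφ₀, hφ₁⟩

variable [TopologicalSpace E] [AddCommGroup E] [Module ℝ E] {AXE : Submodule ℝ (X → E)}

theorem AlmostNormallyMultiplicative.exists_eqOn_zero_eqOn
    (hA : AlmostNormallyMultiplicative X E AXE) (g₀ : AXE)
    {K₁ K₂ : Set (StoneCech X)} (hK₁ : IsClosed K₁) (hK₂ : IsClosed K₂) (hK : Disjoint K₁ K₂) :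
    ∃ g : AXE, ∃ N₁ N₂ : Set (StoneCech X), IsOpen N₁ ∧ IsOpen N₂ ∧ K₁ ⊆ N₁ ∧ K₂ ⊆ N₂ ∧
      (∀ x, stoneCechUnit x ∈ N₁ → (g : X → E) x = 0) ∧
      (∀ x, stoneCechUnit x ∈ N₂ → (g : X → E) x = (g₀ : X → E) x) := by
  obtain ⟨AX, hAX, hmul⟩ := hA.2.2
  obtain ⟨φ, hφ, N₁, N₂, hN₁, hN₂, hKN₁, hKN₂, hφ₀, hφ₁⟩ := hAX.exists_eqOn_zero_one hK₁ hK₂ hK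
  exact ⟨⟨_, hmul φ hφ g₀ g₀.2⟩, N₁, N₂, hN₁, hN₂, hKN₁, hKN₂,
    fun x hx => by simp [hφ₀ x hx], fun x hx => by simp [hφ₁ x hx]⟩

end AlmostNormal

namespace PreservesCommonZeros

variable {X Y E F : Type*} [TopologicalSpace X] [TopologicalSpace Y]
  [AddCommGroup E] [Module ℝ E] [AddCommGroup F] [Module ℝ F]
  {AXE : Submodule ℝ (X → E)} {AYF : Submodule ℝ (Y → F)} {T : AXE ≃ₗ[ℝ] AYF}

protected theorem symm (hT : PreservesCommonZeros T) : PreservesCommonZeros T.symm := by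
  intro k g
  simpa only [LinearEquiv.apply_symm_apply] using (hT k fun i => T.symm (g i)).symm

theorem nonempty_iInter_zeroSet_iff (hT : PreservesCommonZeros T) {ι : Type*} [Finite ι]
    (f : ι → AXE) :
    (⋂ i, zeroSet (f i : X → E)).Nonempty ↔ (⋂ i, zeroSet (T (f i) : Y → F)).Nonempty := by
  obtain ⟨n, ⟨e⟩⟩ := Finite.exists_equiv_fin ι
  cases n with
  | zero =>
    have : IsEmpty ι := e.isEmpty
    simpa [zeroSet] using hT 0 fun _ => 0
  | succ k =>
    have h := hT k fun i => f (e.symm i)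
    rwa [e.symm.surjective.iInter_comp (fun i => zeroSet (f i : X → E)),
      e.symm.surjective.iInter_comp (fun i => zeroSet (T (f i) : Y → F))] at h

theorem apply_ne_zero (hT : PreservesCommonZeros T) {f : AXE} (hf : ∀ x, (f : X → E) x ≠ 0)
    (y : Y) : (T f : Y → F) y ≠ 0 := fun hy => by
  obtain ⟨x, hx⟩ := (hT.nonempty_iInter_zeroSet_iff fun _ : Unit => f).2 ⟨y, by simpa [zeroSet]⟩
  exact hf x (by simpa [zeroSet] using hx)

theorem nonempty_Zx (hT : PreservesCommonZeros T) (x : X) : (Zx T x).Nonempty := by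
  have h := isCompact_univ.inter_iInter_nonempty
    (fun f : {f : AXE // (f : X → E) x = 0} => closure (stoneCechUnit '' zeroSet (T f.1 : Y → F)))
    (fun _ => isClosed_closure) fun u => ?_
  · simpa [Zx, iInter_subtype] using h
  obtain ⟨y, hy⟩ := (hT.nonempty_iInter_zeroSet_iff fun f : u => f.1.1).1
    ⟨x, mem_iInter.2 fun f => f.1.2⟩
  exact ⟨stoneCechUnit y, trivial,
    mem_iInter₂.2 fun f hf => subset_closure ⟨y, mem_iInter.1 hy ⟨f, hf⟩, rfl⟩⟩

noncomputable def supportPoint (hT : PreservesCommonZeros T) (x : X) : StoneCech Y :=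
  (hT.nonempty_Zx x).choose

theorem supportPoint_mem_closure (hT : PreservesCommonZeros T) {f : AXE} {x : X}
    (hf : (f : X → E) x = 0) :
    hT.supportPoint x ∈ closure (stoneCechUnit '' zeroSet (T f : Y → F)) :=
  mem_iInter₂.1 (hT.nonempty_Zx x).choose_spec f hf

theorem betaExt_supportPoint_eq [TopologicalSpace F] (hT : PreservesCommonZeros T)
    {f g : AXE} {x : X} (hfg : (f : X → E) x = (g : X → E) x)
    (hf : Continuous (T f : Y → F)) (hg : Continuous (T g : Y → F)) :
    betaExt hf (hT.supportPoint x) = betaExt hg (hT.supportPoint x) := by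
  have hEq : EqOn (betaExt hf) (betaExt hg) (stoneCechUnit '' zeroSet (T (f - g) : Y → F)) := by
    rintro _ ⟨y, hy, rfl⟩
    have hfgy : (T f : Y → F) y = (T g : Y → F) y := by simpa [zeroSet, sub_eq_zero] using hy
    rw [betaExt_stoneCechUnit, betaExt_stoneCechUnit, hfgy]
  exact hEq.closure (continuous_stoneCechExtend _) (continuous_stoneCechExtend _)
    (hT.supportPoint_mem_closure (by simp [hfg]))

theorem apply_eq_of_eqOn_nhds (hconst : ∀ u : E, (fun _ : X => u) ∈ AXE)
    (hT : PreservesCommonZeros T) {f g : AXE} {x : X} {O : Set (StoneCech Y)} (hO : IsOpen O)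
    (hxO : hT.supportPoint x ∈ O) (hfg : ∀ y, stoneCechUnit y ∈ O → (T f : Y → F) y = (T g : Y → F) y) :
    (f : X → E) x = (g : X → E) x := by
  by_contra hne
  have hx : ((f - g : AXE) : X → E) x ≠ 0 := by simpa [sub_eq_zero] using hne
  let c : AXE := ⟨fun _ => ((f - g : AXE) : X → E) x, hconst _⟩
  have hsub : stoneCechUnit '' zeroSet (T (f - g - c) : Y → F) ⊆ Oᶜ := by
    rintro _ ⟨y, hy, rfl⟩ hyO
    have hc : (T (f - g) : Y → F) y = (T c : Y → F) y := by simpa [zeroSet, sub_eq_zero] using hy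
    refine hT.apply_ne_zero (f := c) (fun _ => hx) y (hc ▸ ?_)
    simp [hfg y hyO]
  exact closure_minimal hsub hO.isClosed_compl
    (hT.supportPoint_mem_closure (by simp [c])) hxO

theorem continuous_supportPoint [TopologicalSpace E] [T1Space E] [Nontrivial E]
    [TopologicalSpace F] (hAXE : AlmostNormallyMultiplicative X E AXE)
    (hAYF : AlmostNormallyMultiplicative Y F AYF) (hT : PreservesCommonZeros T) :
    Continuous hT.supportPoint := by
  obtain ⟨u, hu⟩ := exists_ne (0 : E)
  let c : AXE := ⟨fun _ => u, hAXE.2.1 u⟩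
  refine continuous_iff_continuousAt.2 fun x =>
    (nhds_basis_opens _).tendsto_right_iff.2 fun U ⟨hxU, hU⟩ => ?_
  obtain ⟨g, N₁, N₂, hN₁, hN₂, hxN₁, hUN₂, hg₀, hgc⟩ := hAYF.exists_eqOn_zero_eqOn (T c)
    isClosed_singleton hU.isClosed_compl (disjoint_singleton_left.2 (not_not.2 hxU))
  have hfx : (T.symm g : X → E) x = 0 :=
    hT.apply_eq_of_eqOn_nhds hAXE.2.1 (g := 0) hN₁ (hxN₁ rfl) fun y hy => by simpa using hg₀ y hy
  have hfu : ∀ x', hT.supportPoint x' ∉ U → (T.symm g : X → E) x' = u := fun x' hx' =>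
    hT.apply_eq_of_eqOn_nhds hAXE.2.1 (g := c) hN₂ (hUN₂ hx') fun y hy => by simpa using hgc y hy
  have hopen : IsOpen {x' | (T.symm g : X → E) x' ≠ u} :=
    isOpen_compl_singleton.preimage (hAXE.1 _ (T.symm g).2)
  filter_upwards [hopen.mem_nhds (show _ ≠ u by rw [hfx]; exact hu.symm)] with x' hx'
  exact not_not.1 (mt (hfu x') hx')

theorem denseRange_supportPoint [TopologicalSpace E] [Nontrivial E] [TopologicalSpace F]
    (hAXE : AlmostNormallyMultiplicative X E AXE) (hAYF : AlmostNormallyMultiplicative Y F AYF)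
    (hT : PreservesCommonZeros T) : DenseRange hT.supportPoint := by
  obtain ⟨u, hu⟩ := exists_ne (0 : E)
  let c : AXE := ⟨fun _ => u, hAXE.2.1 u⟩
  refine dense_iff_closure_eq.2 (eq_univ_of_forall fun η => by_contra fun hη => ?_)
  obtain ⟨g, N₁, N₂, hN₁, hN₂, hηN₁, hN₂', hg₀, hgc⟩ := hAYF.exists_eqOn_zero_eqOn (T c)
    isClosed_singleton isClosed_closure (disjoint_singleton_left.2 hη)
  have hgc' : T c = g := by
    rw [← T.apply_symm_apply g]
    congr 1
    exact Subtype.ext <| funext fun x => (hT.apply_eq_of_eqOn_nhds hAXE.2.1 hN₂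
      (hN₂' (subset_closure (mem_range_self x))) fun y hy => by simpa using hgc y hy).symm
  obtain ⟨y, hy⟩ := denseRange_stoneCechUnit.exists_mem_open hN₁ ⟨η, hηN₁ rfl⟩
  exact hT.apply_ne_zero (f := c) (fun _ => hu) y (hgc' ▸ hg₀ y hy)

theorem stoneCechExtend_supportPoint_symm [TopologicalSpace E] [Nontrivial E]
    (hAXE : AlmostNormallyMultiplicative X E AXE) (hT : PreservesCommonZeros T)
    (hν : Continuous hT.symm.supportPoint) (x : X) :
    stoneCechExtend hν (hT.supportPoint x) = stoneCechUnit x := by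
  by_contra hne
  obtain ⟨u, hu⟩ := exists_ne (0 : E)
  obtain ⟨p, N₁, N₂, hN₁, hN₂, hxN₁, hN₂', hp₀, hpu⟩ :=
    hAXE.exists_eqOn_zero_eqOn ⟨fun _ => u, hAXE.2.1 u⟩ isClosed_singleton isClosed_singleton
      (disjoint_singleton.2 (Ne.symm hne))
  have hZp : closure (stoneCechUnit '' zeroSet (p : X → E)) ⊆ N₂ᶜ :=
    closure_minimal (by rintro _ ⟨x', hx', rfl⟩ hx'N; exact hu ((hpu x' hx'N).symm.trans hx'))
      hN₂.isClosed_compl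
  have hmaps : MapsTo (stoneCechExtend hν) (stoneCechUnit '' zeroSet (T p : Y → F)) N₂ᶜ := by
    rintro _ ⟨y, hy, rfl⟩
    rw [stoneCechExtend_stoneCechUnit]
    exact hZp (by simpa using hT.symm.supportPoint_mem_closure (f := T p) hy)
  exact hmaps.closure_left (continuous_stoneCechExtend hν) hN₂.isClosed_compl
    (hT.supportPoint_mem_closure (hp₀ x (hxN₁ rfl))) (hN₂' rfl)

end PreservesCommonZeros

theorem thm2 {X Y E F : Type*}
    [TopologicalSpace X] [T2Space X] [CompletelyRegularSpace X]
    [TopologicalSpace Y] [T2Space Y] [CompletelyRegularSpace Y]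
    [AddCommGroup E] [Module ℝ E] [TopologicalSpace E]
    [T2Space E] [Nontrivial E]
    [AddCommGroup F] [Module ℝ F] [TopologicalSpace F]
    [T2Space F] [Nontrivial F]
    {AXE : Submodule ℝ (X → E)} {AYF : Submodule ℝ (Y → F)}
    (hAXE : AlmostNormallyMultiplicative X E AXE)
    (hAYF : AlmostNormallyMultiplicative Y F AYF)
    (T : AXE ≃ₗ[ℝ] AYF)
    (hT : PreservesCommonZeros (T : AXE → AYF)) :
    ∃ (Z : Set (StoneCech Y)) (W : Set (StoneCech X)) (h : Z ≃ₜ X) (k : W ≃ₜ Y),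
      Dense Z ∧ Dense W ∧
      -- (i) `h ∪ k⁻¹ : Z ∪ ι_Y(Y) → ι_X(X) ∪ W` is a well-defined homeomorphism
      (∃ H : (Z ∪ Set.range (stoneCechUnit : Y → StoneCech Y) : Set (StoneCech Y)) ≃ₜ
          (Set.range (stoneCechUnit : X → StoneCech X) ∪ W : Set (StoneCech X)),
        (∀ (y : StoneCech Y) (hy : y ∈ Z),
          (H ⟨y, Set.mem_union_left _ hy⟩ : StoneCech X) = stoneCechUnit (h ⟨y, hy⟩)) ∧
        (∀ y : Y,
          (H ⟨stoneCechUnit y, Set.mem_union_right _ (Set.mem_range_self y)⟩ : StoneCech X) =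
            (k.symm y : StoneCech X))) ∧
      -- (ii) the formula for `T`
      (∀ (f : AXE) (y : Z),
        betaExt (hAYF.1 _ (T f).2) (y : StoneCech Y) =
          betaExt (hAYF.1 _ (T ⟨fun _ => (f : X → E) (h y), hAXE.2.1 _⟩).2)
            (y : StoneCech Y)) ∧
      -- (iii) the formula for `T⁻¹`
      (∀ (g : AYF) (x : W),
        betaExt (hAXE.1 _ (T.symm g).2) (x : StoneCech X) =
          betaExt (hAXE.1 _ (T.symm ⟨fun _ => (g : Y → F) (k x), hAYF.2.1 _⟩).2)
            (x : StoneCech X)) := by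
  have hμ : Continuous hT.supportPoint := hT.continuous_supportPoint hAXE hAYF
  have hν : Continuous hT.symm.supportPoint := hT.symm.continuous_supportPoint hAYF hAXE
  have hνμ := hT.stoneCechExtend_supportPoint_symm hAXE hν
  have hμν := hT.symm.stoneCechExtend_supportPoint_symm hAYF hμ
  have hμemb := isEmbedding_of_stoneCechExtend_comp_eq hμ hν hνμ
  have hνemb := isEmbedding_of_stoneCechExtend_comp_eq hν hμ hμν
  have hμh : ∀ z, hT.supportPoint (hμemb.toHomeomorph.symm z) = z := fun z =>
    congrArg Subtype.val (hμemb.toHomeomorph.apply_symm_apply z)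
  have hνk : ∀ w, hT.symm.supportPoint (hνemb.toHomeomorph.symm w) = w := fun w =>
    congrArg Subtype.val (hνemb.toHomeomorph.apply_symm_apply w)
  obtain ⟨H, hH⟩ := exists_homeomorph_union_range_of_stoneCechExtend_comp_eq hμ hν hνμ hμν
  refine ⟨range hT.supportPoint, range hT.symm.supportPoint, hμemb.toHomeomorph.symm, hνemb.toHomeomorph.symm,
    hT.denseRange_supportPoint hAXE hAYF, hT.symm.denseRange_supportPoint hAYF hAXE,
    ⟨H, fun y hy => ?_, fun y => ?_⟩, fun f y => ?_, fun g x => ?_⟩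
  · rw [hH, ← hνμ, hμh]
  · rw [hH, stoneCechExtend_stoneCechUnit]
    rfl
  · rw [← hμh y]
    exact hT.betaExt_supportPoint_eq (by rfl) _ _
  · rw [← hνk x]
    exact hT.symm.betaExt_supportPoint_eq (by rfl) _ _
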